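/- Let Γ be a simple language and G = closure(Γ^∩). If α, β ∈ G with α ≻ β, then there exists γ ∈ G with γ ≠ α such that (α, γ) is an edge of E_G[G] ∪ E_H[G, ⊇] and γ ⪰ β. -/

import Mathlib

open scoped Classical

noncomputable section

/-- A predicate of arity `ar` over `D`: a set of words over `D`, all of length `ar`. -/
structure GPred (D : Type*) where
  ar : ℕ
  s : Set (List D)
  len : ∀ w ∈ s, w.length = ar

namespace GPred

variable {D : Type*}

/-- `*α`: the set of words whose suffix of length `α.ar` lies in `α`. -/
def star (α : GPred D) : Set (List D) :=
  {w | α.ar ≤ w.length ∧ w.drop (w.length - α.ar) ∈ α.s}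

/-- The operation `α | β`: restrict the longer predicate to tuples whose suffix lies
in the shorter one. -/
def bar (α β : GPred D) : GPred D :=
  if β.ar ≤ α.ar then
    ⟨α.ar, {w | w ∈ α.s ∧ w.drop (α.ar - β.ar) ∈ β.s}, fun w hw => α.len w hw.1⟩
  else
    ⟨β.ar, {w | w ∈ β.s ∧ w.drop (β.ar - α.ar) ∈ α.s}, fun w hw => β.len w hw.1⟩

/-- `α⁻`: drop the last coordinate. -/
def minus (α : GPred D) : GPred D :=
  ⟨α.ar - 1, {w | ∃ a : D, w ++ [a] ∈ α.s}, by
    rintro w ⟨a, ha⟩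
    have h := α.len _ ha
    simp at h
    omega⟩

/-- `α⁻ × {a}`. -/
def sufSingle (α : GPred D) (a : D) : GPred D :=
  ⟨α.ar, {w | ∃ w', (∃ b : D, w' ++ [b] ∈ α.s) ∧ w = w' ++ [a]}, by
    rintro w ⟨w', ⟨b, hb⟩, rfl⟩
    have h := α.len _ hb
    simp at h ⊢
    omega⟩

/-- Prefix projection `α_{1:i}`. -/
def prefProj (α : GPred D) (i : ℕ) : GPred D :=
  ⟨i, {w | w.length = i ∧ ∃ t, w ++ t ∈ α.s}, fun _ hw => hw.1⟩

/-- Suffix projection of length `i`, i.e. `α_{‖α‖-i+1:‖α‖}`. -/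
def sufProj (α : GPred D) (i : ℕ) : GPred D :=
  ⟨i, {w | w.length = i ∧ ∃ t, t ++ w ∈ α.s}, fun _ hw => hw.1⟩

/-- A predicate is simple if it is a cartesian product of subsets of `D`. -/
def IsSimple (α : GPred D) : Prop :=
  ∃ Ωs : List (Set D), α.ar = Ωs.length ∧ α.s = {w | List.Forall₂ (· ∈ ·) w Ωs}

/-- `α ≥ β` iff `*α ⊇ *β`. -/
def pge (α β : GPred D) : Prop := β.star ⊆ α.star

/-- `α > β`. -/
def pgt (α β : GPred D) : Prop := pge α β ∧ α ≠ β

/-- `β ⊊ α`: strict inclusion of predicates of equal arity. -/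
def pssub (β α : GPred D) : Prop := β.ar = α.ar ∧ β.s ⊂ α.s

/-- `α ≻ β` iff `‖β‖ > ‖α‖` and the suffix projection `β_{‖β‖-‖α‖+1:‖β‖} ⊆ α`. -/
def psucc (α β : GPred D) : Prop := α.ar < β.ar ∧ (β.sufProj α.ar).s ⊆ α.s

/-- `α ⪰ β`. -/
def psucceq (α β : GPred D) : Prop := psucc α β ∨ α = β

def PrefClosed (G : Set (GPred D)) : Prop := ∀ ρ ∈ G, 1 ≤ ρ.ar → ρ.minus ∈ G

def InterClosed (G : Set (GPred D)) : Prop := ∀ α ∈ G, ∀ β ∈ G, α.bar β ∈ G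

def SSClosed (G : Set (GPred D)) : Prop := ∀ ρ ∈ G, 1 ≤ ρ.ar → ∀ a : D, ρ.sufSingle a ∈ G

/-- `closure(Γ^∩)`: the smallest prefix- and intersection-closed superset of `Γ`. -/
def piClosure (Γ : Set (GPred D)) : Set (GPred D) :=
  ⋂₀ {G | Γ ⊆ G ∧ PrefClosed G ∧ InterClosed G}

/-- `Γ*`: the smallest prefix-, intersection- and singleton-suffix-closed superset of `Γ`. -/
def fullClosure (Γ : Set (GPred D)) : Set (GPred D) :=
  ⋂₀ {G | Γ ⊆ G ∧ PrefClosed G ∧ InterClosed G ∧ SSClosed G}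

/-- `Γ°`: the singleton suffix closure `Γ ∪ {ρ⁻ × {a} : ρ ∈ Γ, a ∈ D}`. -/
def sscSet (Γ : Set (GPred D)) : Set (GPred D) :=
  Γ ∪ {σ | ∃ ρ ∈ Γ, 1 ≤ ρ.ar ∧ ∃ a : D, σ = ρ.sufSingle a}

/-- Edges of the Hasse diagram of `(G, ≥)`. -/
def HasseGe (G : Set (GPred D)) (α β : GPred D) : Prop :=
  α ∈ G ∧ β ∈ G ∧ pgt α β ∧ ¬ ∃ γ ∈ G, pgt α γ ∧ pgt γ β

/-- Edges of the Hasse diagram of `(G, ⊇)`. -/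
def HasseSub (G : Set (GPred D)) (α β : GPred D) : Prop :=
  α ∈ G ∧ β ∈ G ∧ pssub β α ∧ ¬ ∃ γ ∈ G, pssub γ α ∧ pssub β γ

/-- Edges of the graph `G[G]`. -/
def EdgeG (G : Set (GPred D)) (α β : GPred D) : Prop :=
  α ∈ G ∧ β ∈ G ∧ psucc α β ∧
    ¬ ∃ γ ∈ G, (psucc α γ ∧ psucc γ β) ∨ (pssub γ α ∧ psucc γ β)

/-- `X_s(α; G)`. -/
def X (s : ℕ) (α : GPred D) (G : Set (GPred D)) : Set (List D) :=
  {x | x.length = s ∧ x ∈ α.star ∧ ∀ β ∈ G, pgt α β → x ∉ β.star}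

/-- `X_s(α)`. -/
def Xall (s : ℕ) (α : GPred D) : Set (List D) :=
  {x | x.length = s ∧ x ∈ α.star}

/-- Projection of `α` onto its last coordinate. -/
def projLast (α : GPred D) : Set D := {a | ∃ w, w ++ [a] ∈ α.s}

/-- The cartesian-product predicate `Ω₁ × ⋯ × Ω_l`. -/
def predOfList (Ωs : List (Set D)) : GPred D :=
  ⟨Ωs.length, {w | List.Forall₂ (· ∈ ·) w Ωs}, fun _ hw => List.Forall₂.length_eq hw⟩

end GPred

/-! `closure(Γ^∩)` is finite, since its arities are bounded by those of `Γ`. If some `γ ⊊ α`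
in `G` has `γ ≻ β`, an inclusion-maximal such `γ` is a Hasse edge below `α`. Otherwise a `γ` of
least arity with `α ≻ γ ⪰ β` is an edge of `E_G[G]`: a `δ` between them would satisfy `δ ≻ β`
by transitivity, so it would either have smaller arity or be a `δ ⊊ α` with `δ ≻ β`. -/

namespace GPred

variable {D : Type*}

lemma ext {α β : GPred D} (har : α.ar = β.ar) (hs : α.s = β.s) : α = β := by
  cases α; cases β; simp_all

lemma psucc_iff {α β : GPred D} :
    psucc α β ↔ α.ar < β.ar ∧ ∀ w ∈ β.s, w.drop (β.ar - α.ar) ∈ α.s := by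
  refine and_congr_right fun hlt =>
    ⟨fun hsuf w hw => hsuf ⟨?_, w.take (β.ar - α.ar), ?_⟩, ?_⟩
  · rw [List.length_drop, β.len w hw]; omega
  · rwa [List.take_append_drop]
  · rintro hdrop w ⟨hwlen, t, ht⟩
    have ht_len : t.length = β.ar - α.ar := by
      have := β.len _ ht; rw [List.length_append] at this; omega
    simpa [← ht_len] using hdrop _ ht

lemma psucc_trans {α β γ : GPred D} (hαβ : psucc α β) (hβγ : psucc β γ) : psucc α γ := by
  rw [psucc_iff] at *
  refine ⟨hαβ.1.trans hβγ.1, fun w hw => ?_⟩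
  have key := hαβ.2 _ (hβγ.2 w hw)
  rwa [List.drop_drop, show γ.ar - β.ar + (β.ar - α.ar) = γ.ar - α.ar by omega] at key

lemma psucc_of_ar_eq_of_subset {α α' β : GPred D} (har : α.ar = α'.ar) (hs : α.s ⊆ α'.s)
    (h : psucc α β) : psucc α' β :=
  ⟨har ▸ h.1, har ▸ h.2.trans hs⟩

lemma psucc_irrefl (α : GPred D) : ¬ psucc α α := fun h => h.1.false

lemma pssub_irrefl (α : GPred D) : ¬ pssub α α := fun h => h.2.2 le_rfl

lemma finite_setOf_ar_le [Finite D] (N : ℕ) : {ρ : GPred D | ρ.ar ≤ N}.Finite := by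
  have hcodomain : (Set.Iic N ×ˢ {t : Set (List D) | t ⊆ {w | w.length ≤ N}}).Finite :=
    (Set.finite_Iic N).prod (List.finite_length_le D N).finite_subsets
  refine Set.Finite.of_finite_image (f := fun ρ : GPred D => (ρ.ar, ρ.s))
    (hcodomain.subset ?_) (fun _ _ _ _ h => ext (congrArg Prod.fst h) (congrArg Prod.snd h))
  rintro _ ⟨ρ, hρ, rfl⟩
  exact ⟨hρ, fun w hw => (ρ.len w hw).trans_le hρ⟩

lemma piClosure_subset_setOf_ar_le {Γ : Set (GPred D)} {N : ℕ} (hN : ∀ ρ ∈ Γ, ρ.ar ≤ N) :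
    piClosure Γ ⊆ {ρ | ρ.ar ≤ N} := by
  refine Set.sInter_subset_of_mem ⟨hN, fun ρ hρ _ => ?_, fun α hα β hβ => ?_⟩
  · exact (Nat.sub_le _ _).trans hρ
  · unfold bar; split_ifs <;> assumption

lemma piClosure_finite [Finite D] {Γ : Set (GPred D)} (hΓ : Γ.Finite) :
    (piClosure Γ).Finite := by
  obtain ⟨N, hN⟩ := (hΓ.image ar).bddAbove
  exact (finite_setOf_ar_le N).subset
    (piClosure_subset_setOf_ar_le fun ρ hρ => hN ⟨ρ, hρ, rfl⟩)

variable {G : Set (GPred D)}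

lemma exists_hasseSub_psucc (hG : G.Finite) {α β γ : GPred D} (hα : α ∈ G) (hγ : γ ∈ G)
    (hγα : pssub γ α) (hγβ : psucc γ β) : ∃ γ ∈ G, HasseSub G α γ ∧ psucc γ β := by
  obtain ⟨γ, ⟨hγ, hγα, hγβ⟩, hmax⟩ := (hG.subset fun _ hx => hx.1).exists_maximalFor s
    {γ ∈ G | pssub γ α ∧ psucc γ β} ⟨γ, hγ, hγα, hγβ⟩
  refine ⟨γ, hγ, ⟨hα, hγ, hγα, ?_⟩, hγβ⟩
  rintro ⟨δ, hδ, hδα, hγδ⟩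
  exact hγδ.2.2 (hmax ⟨hδ, hδα, psucc_of_ar_eq_of_subset hγδ.1 hγδ.2.1 hγβ⟩ hγδ.2.1)

lemma exists_edgeG_psucceq (hG : G.Finite) {α β : GPred D} (hα : α ∈ G) (hβ : β ∈ G)
    (h : psucc α β) (hno : ¬ ∃ γ ∈ G, pssub γ α ∧ psucc γ β) :
    ∃ γ ∈ G, EdgeG G α γ ∧ psucceq γ β := by
  obtain ⟨γ, ⟨hγ, hαγ, hγβ⟩, hmin⟩ := (hG.subset fun _ hx => hx.1).exists_minimalFor ar
    {γ ∈ G | psucc α γ ∧ psucceq γ β} ⟨β, hβ, h, Or.inr rfl⟩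
  refine ⟨γ, hγ, ⟨hα, hγ, hαγ, ?_⟩, hγβ⟩
  rintro ⟨δ, hδ, hcase⟩
  have hδγ : psucc δ γ := by rcases hcase with ⟨_, h⟩ | ⟨_, h⟩ <;> exact h
  have hδβ : psucc δ β := by
    rcases hγβ with hγβ | rfl
    exacts [psucc_trans hδγ hγβ, hδγ]
  rcases hcase with ⟨hαδ, _⟩ | ⟨hδα, _⟩
  · exact (hmin ⟨hδ, hαδ, Or.inl hδβ⟩ hδγ.1.le).not_gt hδγ.1
  · exact hno ⟨δ, hδ, hδα, hδβ⟩

lemma exists_edge_psucceq (hG : G.Finite) {α β : GPred D} (hα : α ∈ G) (hβ : β ∈ G)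
    (h : psucc α β) : ∃ γ ∈ G, γ ≠ α ∧ (EdgeG G α γ ∨ HasseSub G α γ) ∧ psucceq γ β := by
  by_cases hsub : ∃ γ ∈ G, pssub γ α ∧ psucc γ β
  · obtain ⟨γ, hγ, hγα, hγβ⟩ := hsub
    obtain ⟨γ, hγ, hedge, hγβ⟩ := exists_hasseSub_psucc hG hα hγ hγα hγβ
    exact ⟨γ, hγ, by rintro rfl; exact pssub_irrefl _ hedge.2.2.1, Or.inr hedge, Or.inl hγβ⟩
  · obtain ⟨γ, hγ, hedge, hγβ⟩ := exists_edgeG_psucceq hG hα hβ h hsub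
    exact ⟨γ, hγ, by rintro rfl; exact psucc_irrefl _ hedge.2.2.1, Or.inl hedge, hγβ⟩

end GPred

open GPred in
theorem exists_intermediate_edge_general {D : Type*} [Fintype D] (Γ : Set (GPred D))
    (hfin : Γ.Finite)
    (α β : GPred D) (hα : α ∈ piClosure Γ) (hβ : β ∈ piClosure Γ) (h : psucc α β) :
    ∃ γ ∈ piClosure Γ, γ ≠ α ∧
      (EdgeG (piClosure Γ) α γ ∨ HasseSub (piClosure Γ) α γ) ∧ psucceq γ β :=
  exists_edge_psucceq (piClosure_finite hfin) hα hβ h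

open GPred in
/-- if `α ≻ β` in `G = closure(Γ^∩)` (`Γ` simple), there is `γ ∈ G`,
`γ ≠ α`, with `(α,γ) ∈ E_G[G] ∪ E_H[G,⊇]` and `γ ⪰ β`. -/
theorem exists_intermediate_edge {D : Type*} [Fintype D] (Γ : Set (GPred D))
    (hfin : Γ.Finite) (hsimp : ∀ ρ ∈ Γ, ρ.IsSimple)
    (α β : GPred D) (hα : α ∈ piClosure Γ) (hβ : β ∈ piClosure Γ) (h : psucc α β) :
    ∃ γ ∈ piClosure Γ, γ ≠ α ∧
      (EdgeG (piClosure Γ) α γ ∨ HasseSub (piClosure Γ) α γ) ∧ psucceq γ β :=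
  exists_intermediate_edge_general Γ hfin α β hα hβ h
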